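/- For every integer i ≥ 2, the graph Pᵢ on i + 7 vertices {y, v, t₁, …, tᵢ, w, z, u, x, s} with edges: the path y–v–t₁–t₂–⋯–tᵢ–w–z; the edges uv, uw and u tₖ for every 1 ≤ k ≤ i; and the pendant path u–x–s, admits no signed interval representation; consequently the family Pᵢ (i ≥ 2) is a forbidden family of induced subgraphs for co-TT graphs. -/
import Mathlib


/-- The graph `Pᵢ` (for `i ≥ 2`) on `i + 7` vertices. The vertex type is
`Fin i ⊕ Fin 7`, where `Sum.inl k` is `t_{k+1}` and, among `Sum.inr`,
`0 = y`, `1 = v`, `2 = w`, `3 = z`, `4 = u`, `5 = x`, `6 = s`.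
Edges: the path `y–v–t₁–⋯–tᵢ–w–z`, the edges `uv`, `uw`, `u tₖ` for all `k`,
and the pendant path `u–x–s`. -/
def graphPFam (i : ℕ) (hi : 2 ≤ i) : SimpleGraph (Fin i ⊕ Fin 7) :=
  SimpleGraph.fromEdgeSet
    ({s(Sum.inr 0, Sum.inr 1),
      s(Sum.inr 1, Sum.inl ⟨0, by omega⟩),
      s(Sum.inl ⟨i - 1, by omega⟩, Sum.inr 2),
      s(Sum.inr 2, Sum.inr 3),
      s(Sum.inr 4, Sum.inr 1),
      s(Sum.inr 4, Sum.inr 2),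
      s(Sum.inr 4, Sum.inr 5),
      s(Sum.inr 5, Sum.inr 6)} ∪
     {e | ∃ k : ℕ, ∃ h : k + 1 < i, e = s(Sum.inl ⟨k, by omega⟩, Sum.inl ⟨k + 1, h⟩)} ∪
     {e | ∃ k : Fin i, e = s(Sum.inr 4, Sum.inl k)})


lemma signedIntervalCore (i : ℕ) (hi : 2 ≤ i)
    (yl yr vl vr wl wr zl zr ul ur xl xr sl sr : ℝ) (tl tr : ℕ → ℝ)
    (hyv : yl ≤ vr ∧ vl ≤ yr)
    (hvt : vl ≤ tr 0 ∧ tl 0 ≤ vr)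
    (hchain : ∀ k, k + 1 < i → tl k ≤ tr (k+1) ∧ tl (k+1) ≤ tr k)
    (htw : tl (i-1) ≤ wr ∧ wl ≤ tr (i-1))
    (hwz : wl ≤ zr ∧ zl ≤ wr)
    (huv : ul ≤ vr ∧ vl ≤ ur)
    (huw : ul ≤ wr ∧ wl ≤ ur)
    (hux : ul ≤ xr ∧ xl ≤ ur)
    (hxs : xl ≤ sr ∧ sl ≤ xr)
    (huy : ¬(ul ≤ yr ∧ yl ≤ ur))
    (huz : ¬(ul ≤ zr ∧ zl ≤ ur))
    (hus : ¬(ul ≤ sr ∧ sl ≤ ur))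
    (hxv : ¬(xl ≤ vr ∧ vl ≤ xr))
    (hxw : ¬(xl ≤ wr ∧ wl ≤ xr))
    (hxt : ∀ k, k < i → ¬(xl ≤ tr k ∧ tl k ≤ xr))
    (hdir : vr < wl) : False := by
  have hy : yr < ul := by
    rcases not_and_or.mp huy with h | h
    · linarith [not_le.mp h]
    · exfalso; linarith [not_le.mp h, hyv.1, huw.2]
  have hz : ur < zl := by
    rcases not_and_or.mp huz with h | h
    · exfalso; linarith [not_le.mp h, huv.1, hwz.1]
    · linarith [not_le.mp h]
  have hbx : xl ≤ xr := by
    rcases not_and_or.mp hus with h | h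
    · linarith [not_le.mp h, hxs.1, hux.1]
    · linarith [not_le.mp h, hux.2, hxs.2]
  have hlx : vr < xl := by
    rcases not_and_or.mp hxv with h | h
    · linarith [not_le.mp h]
    · exfalso; linarith [not_le.mp h, hyv.2, hy, hux.1]
  have hrx : xr < wl := by
    rcases not_and_or.mp hxw with h | h
    · exfalso; linarith [not_le.mp h, hux.2, hz, hwz.2]
    · linarith [not_le.mp h]
  have key : ∀ k, k < i → tr k < xl := by
    intro k
    induction k with
    | zero =>
      intro hk
      rcases not_and_or.mp (hxt 0 hk) with h | h
      · linarith [not_le.mp h]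
      · exfalso; linarith [not_le.mp h, hvt.2]
    | succ k ih =>
      intro hk
      have h1 := ih (by omega)
      have h2 := (hchain k hk).2
      rcases not_and_or.mp (hxt (k+1) hk) with h | h
      · linarith [not_le.mp h]
      · exfalso; linarith [not_le.mp h]
  have := key (i-1) (by omega)
  linarith [htw.2]

section PFamFacts

variable (i : ℕ) (hi : 2 ≤ i)

lemma pfam_adj_yv : (graphPFam i hi).Adj (Sum.inr 0) (Sum.inr 1) := by
  simp [graphPFam, SimpleGraph.fromEdgeSet_adj, Sym2.eq_iff]

lemma pfam_adj_vt : (graphPFam i hi).Adj (Sum.inr 1) (Sum.inl ⟨0, by omega⟩) := by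
  simp [graphPFam, SimpleGraph.fromEdgeSet_adj, Sym2.eq_iff]

lemma pfam_adj_chain (k : ℕ) (hk : k + 1 < i) :
    (graphPFam i hi).Adj (Sum.inl ⟨k, by omega⟩) (Sum.inl ⟨k+1, hk⟩) := by
  simp only [graphPFam, SimpleGraph.fromEdgeSet_adj, Set.mem_union, Set.mem_insert_iff,
    Set.mem_setOf_eq, Set.mem_singleton_iff]
  exact ⟨Or.inl (Or.inr ⟨k, hk, rfl⟩), by simp [Fin.ext_iff]⟩

lemma pfam_adj_tw : (graphPFam i hi).Adj (Sum.inl ⟨i-1, by omega⟩) (Sum.inr 2) := by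
  simp [graphPFam, SimpleGraph.fromEdgeSet_adj, Sym2.eq_iff]

lemma pfam_adj_wz : (graphPFam i hi).Adj (Sum.inr 2) (Sum.inr 3) := by
  simp [graphPFam, SimpleGraph.fromEdgeSet_adj, Sym2.eq_iff]

lemma pfam_adj_uv : (graphPFam i hi).Adj (Sum.inr 4) (Sum.inr 1) := by
  simp [graphPFam, SimpleGraph.fromEdgeSet_adj, Sym2.eq_iff]

lemma pfam_adj_uw : (graphPFam i hi).Adj (Sum.inr 4) (Sum.inr 2) := by
  simp [graphPFam, SimpleGraph.fromEdgeSet_adj, Sym2.eq_iff]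

lemma pfam_adj_ux : (graphPFam i hi).Adj (Sum.inr 4) (Sum.inr 5) := by
  simp [graphPFam, SimpleGraph.fromEdgeSet_adj, Sym2.eq_iff]

lemma pfam_adj_xs : (graphPFam i hi).Adj (Sum.inr 5) (Sum.inr 6) := by
  simp [graphPFam, SimpleGraph.fromEdgeSet_adj, Sym2.eq_iff]

lemma pfam_nadj_vw : ¬ (graphPFam i hi).Adj (Sum.inr 1) (Sum.inr 2) := by
  simp [graphPFam, SimpleGraph.fromEdgeSet_adj, Sym2.eq_iff]

lemma pfam_nadj_uy : ¬ (graphPFam i hi).Adj (Sum.inr 4) (Sum.inr 0) := by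
  simp [graphPFam, SimpleGraph.fromEdgeSet_adj, Sym2.eq_iff]

lemma pfam_nadj_uz : ¬ (graphPFam i hi).Adj (Sum.inr 4) (Sum.inr 3) := by
  simp [graphPFam, SimpleGraph.fromEdgeSet_adj, Sym2.eq_iff]

lemma pfam_nadj_us : ¬ (graphPFam i hi).Adj (Sum.inr 4) (Sum.inr 6) := by
  simp [graphPFam, SimpleGraph.fromEdgeSet_adj, Sym2.eq_iff]

lemma pfam_nadj_xv : ¬ (graphPFam i hi).Adj (Sum.inr 5) (Sum.inr 1) := by
  simp [graphPFam, SimpleGraph.fromEdgeSet_adj, Sym2.eq_iff]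

lemma pfam_nadj_xw : ¬ (graphPFam i hi).Adj (Sum.inr 5) (Sum.inr 2) := by
  simp [graphPFam, SimpleGraph.fromEdgeSet_adj, Sym2.eq_iff]

lemma pfam_nadj_xt (k : ℕ) (hk : k < i) :
    ¬ (graphPFam i hi).Adj (Sum.inr 5) (Sum.inl ⟨k, hk⟩) := by
  simp [graphPFam, SimpleGraph.fromEdgeSet_adj, Sym2.eq_iff]

end PFamFacts

/-- `G` is a signed interval graph. -/
def IsSignedIntervalGraph {V : Type*} (G : SimpleGraph V) : Prop :=
  ∃ l r : V → ℝ, ∀ u v : V, u ≠ v → (G.Adj u v ↔ l u ≤ r v ∧ l v ≤ r u)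

theorem graphPFam_not_signed_interval (i : ℕ) (hi : 2 ≤ i) :
    ¬ IsSignedIntervalGraph (graphPFam i hi) := by
  rintro ⟨l, r, h⟩
  have hyv := (h _ _ (by simp)).mp (pfam_adj_yv i hi)
  have hvt := (h _ _ (by simp)).mp (pfam_adj_vt i hi)
  have hchain : ∀ k (hk : k + 1 < i),
      l (Sum.inl ⟨k, by omega⟩) ≤ r (Sum.inl ⟨k+1, hk⟩) ∧
      l (Sum.inl ⟨k+1, hk⟩) ≤ r (Sum.inl ⟨k, by omega⟩) := fun k hk =>
    (h _ _ (by simp [Fin.ext_iff])).mp (pfam_adj_chain i hi k hk)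
  have htw := (h _ _ (by simp)).mp (pfam_adj_tw i hi)
  have hwz := (h _ _ (by simp)).mp (pfam_adj_wz i hi)
  have huv := (h _ _ (by simp)).mp (pfam_adj_uv i hi)
  have huw := (h _ _ (by simp)).mp (pfam_adj_uw i hi)
  have hux := (h _ _ (by simp)).mp (pfam_adj_ux i hi)
  have hxs := (h _ _ (by simp)).mp (pfam_adj_xs i hi)
  have hvw : ¬ (l (Sum.inr 1) ≤ r (Sum.inr 2) ∧ l (Sum.inr 2) ≤ r (Sum.inr 1)) :=
    fun hc => pfam_nadj_vw i hi ((h _ _ (by simp)).mpr hc)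
  have huy : ¬ (l (Sum.inr 4) ≤ r (Sum.inr 0) ∧ l (Sum.inr 0) ≤ r (Sum.inr 4)) :=
    fun hc => pfam_nadj_uy i hi ((h _ _ (by simp)).mpr hc)
  have huz : ¬ (l (Sum.inr 4) ≤ r (Sum.inr 3) ∧ l (Sum.inr 3) ≤ r (Sum.inr 4)) :=
    fun hc => pfam_nadj_uz i hi ((h _ _ (by simp)).mpr hc)
  have hus : ¬ (l (Sum.inr 4) ≤ r (Sum.inr 6) ∧ l (Sum.inr 6) ≤ r (Sum.inr 4)) :=
    fun hc => pfam_nadj_us i hi ((h _ _ (by simp)).mpr hc)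
  have hxv : ¬ (l (Sum.inr 5) ≤ r (Sum.inr 1) ∧ l (Sum.inr 1) ≤ r (Sum.inr 5)) :=
    fun hc => pfam_nadj_xv i hi ((h _ _ (by simp)).mpr hc)
  have hxw : ¬ (l (Sum.inr 5) ≤ r (Sum.inr 2) ∧ l (Sum.inr 2) ≤ r (Sum.inr 5)) :=
    fun hc => pfam_nadj_xw i hi ((h _ _ (by simp)).mpr hc)
  have hxt : ∀ k (hk : k < i),
      ¬ (l (Sum.inr 5) ≤ r (Sum.inl ⟨k, hk⟩) ∧ l (Sum.inl ⟨k, hk⟩) ≤ r (Sum.inr 5)) :=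
    fun k hk hc => pfam_nadj_xt i hi k hk ((h _ _ (by simp)).mpr hc)
  -- index-safe t functions
  have hipos : 0 < i := by omega
  set tL : ℕ → ℝ := fun k => l (Sum.inl ⟨k % i, Nat.mod_lt _ hipos⟩) with htL
  set tR : ℕ → ℝ := fun k => r (Sum.inl ⟨k % i, Nat.mod_lt _ hipos⟩) with htR
  have htLeq : ∀ k (hk : k < i), tL k = l (Sum.inl ⟨k, hk⟩) := by
    intro k hk; simp [htL, Nat.mod_eq_of_lt hk]
  have htReq : ∀ k (hk : k < i), tR k = r (Sum.inl ⟨k, hk⟩) := by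
    intro k hk; simp [htR, Nat.mod_eq_of_lt hk]
  have hchain' : ∀ k, k + 1 < i → tL k ≤ tR (k+1) ∧ tL (k+1) ≤ tR k := by
    intro k hk
    rw [htLeq k (by omega), htReq (k+1) hk, htLeq (k+1) hk, htReq k (by omega)]
    exact hchain k hk
  have hvt' : l (Sum.inr 1) ≤ tR 0 ∧ tL 0 ≤ r (Sum.inr 1) := by
    rw [htLeq 0 (by omega), htReq 0 (by omega)]; exact hvt
  have htw' : tL (i-1) ≤ r (Sum.inr 2) ∧ l (Sum.inr 2) ≤ tR (i-1) := by
    rw [htLeq (i-1) (by omega), htReq (i-1) (by omega)]; exact htw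
  have hxt' : ∀ k, k < i → ¬ (l (Sum.inr 5) ≤ tR k ∧ tL k ≤ r (Sum.inr 5)) := by
    intro k hk
    rw [htLeq k hk, htReq k hk]; exact hxt k hk
  rcases not_and_or.mp hvw with hdir | hdir
  · -- mirrored case: negate everything
    set mL : ℕ → ℝ := fun k => -(tR k) with hmL
    set mR : ℕ → ℝ := fun k => -(tL k) with hmR
    have mLk : ∀ k, mL k = -(tR k) := fun k => rfl
    have mRk : ∀ k, mR k = -(tL k) := fun k => rfl
    have m_vt : -(r (Sum.inr 1)) ≤ mR 0 ∧ mL 0 ≤ -(l (Sum.inr 1)) := by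
      rw [mRk, mLk]; exact ⟨by linarith [hvt'.1], by linarith [hvt'.2]⟩
    have m_chain : ∀ k, k + 1 < i → mL k ≤ mR (k+1) ∧ mL (k+1) ≤ mR k := by
      intro k hk
      rw [mRk, mLk, mRk, mLk]
      exact ⟨by linarith [(hchain' k hk).2], by linarith [(hchain' k hk).1]⟩
    have m_tw : mL (i-1) ≤ -(l (Sum.inr 2)) ∧ -(r (Sum.inr 2)) ≤ mR (i-1) := by
      rw [mRk, mLk]; exact ⟨by linarith [htw'.2], by linarith [htw'.1]⟩
    have m_xt : ∀ k, k < i → ¬(-(r (Sum.inr 5)) ≤ mR k ∧ mL k ≤ -(l (Sum.inr 5))) := by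
      intro k hk
      rw [mRk, mLk]
      exact fun hc => hxt' k hk ⟨by linarith [hc.1], by linarith [hc.2]⟩
    exact signedIntervalCore i hi
      (-(r (Sum.inr 0))) (-(l (Sum.inr 0))) (-(r (Sum.inr 1))) (-(l (Sum.inr 1)))
      (-(r (Sum.inr 2))) (-(l (Sum.inr 2))) (-(r (Sum.inr 3))) (-(l (Sum.inr 3)))
      (-(r (Sum.inr 4))) (-(l (Sum.inr 4))) (-(r (Sum.inr 5))) (-(l (Sum.inr 5)))
      (-(r (Sum.inr 6))) (-(l (Sum.inr 6))) mL mR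
      ⟨by linarith [hyv.2], by linarith [hyv.1]⟩ m_vt m_chain m_tw
      ⟨by linarith [hwz.2], by linarith [hwz.1]⟩
      ⟨by linarith [huv.2], by linarith [huv.1]⟩
      ⟨by linarith [huw.2], by linarith [huw.1]⟩
      ⟨by linarith [hux.2], by linarith [hux.1]⟩
      ⟨by linarith [hxs.2], by linarith [hxs.1]⟩
      (fun hc => huy ⟨by linarith [hc.2], by linarith [hc.1]⟩)
      (fun hc => huz ⟨by linarith [hc.2], by linarith [hc.1]⟩)
      (fun hc => hus ⟨by linarith [hc.2], by linarith [hc.1]⟩)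
      (fun hc => hxv ⟨by linarith [hc.2], by linarith [hc.1]⟩)
      (fun hc => hxw ⟨by linarith [hc.2], by linarith [hc.1]⟩)
      m_xt (by linarith [not_le.mp hdir])
  · -- direct case
    exact signedIntervalCore i hi
      (l (Sum.inr 0)) (r (Sum.inr 0)) (l (Sum.inr 1)) (r (Sum.inr 1))
      (l (Sum.inr 2)) (r (Sum.inr 2)) (l (Sum.inr 3)) (r (Sum.inr 3))
      (l (Sum.inr 4)) (r (Sum.inr 4)) (l (Sum.inr 5)) (r (Sum.inr 5))
      (l (Sum.inr 6)) (r (Sum.inr 6)) tL tR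
      hyv hvt' hchain' htw' hwz huv huw hux hxs
      huy huz hus hxv hxw hxt' (not_le.mp hdir)
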